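/- arXiv:2210.17225 — 5 statements merged into one kernel-verified Lean document; each statement's English description precedes it below -/
import Mathlib

section
/- Let Ω ⊂ ℝ² be a bounded open set contained in the strip S = ℝ × [−w/2, w/2], with area |Ω| = A = wL where L > 0. Define u on S by u(x,y) = sin(πx/L) for |x| ≤ L/2, u = 1 for x > L/2, and u = −1 for x < −L/2, and let R = [−L/2, L/2] × [−w/2, w/2]. Then ∫_Ω |∇u|² ≤ ∫_R |∇u|² and ∫_Ω u² ≥ ∫_R u², so the Rayleigh quotient of u on Ω is at most π²/L². -/
/-!
Off the rectangle `R` the profile `u` is constant `±1`, so `∇u = 0` there. Hence `Ω \ R` adds no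
energy, which gives the first inequality, while it adds `|Ω \ R| = |R \ Ω|` to `∫ u²`, at least
what `R \ Ω` contributes to `∫_R u²` because `u² ≤ 1`. On `R` both integrals separate:
`∫_R |∇u|² = π² w / (2L)` and `∫_R u² = L w / 2`, whose ratio is `π² / L²`.
-/

open Real MeasureTheory Set Topology
open scoped ENNReal

section SetIntegral

variable {α : Type*} [MeasurableSpace α] {μ : Measure α} {f : α → ℝ} {s t : Set α}

theorem setIntegral_le_of_eq_zero_on_sdiff (hs : MeasurableSet s) (hft : IntegrableOn f t μ)
    (hf : 0 ≤ᵐ[μ.restrict t] f) (hzero : ∀ x ∈ s \ t, f x = 0) :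
    ∫ x in s, f x ∂μ ≤ ∫ x in t, f x ∂μ := by
  rw [setIntegral_eq_of_subset_of_forall_sdiff_eq_zero hs inter_subset_left
    fun x hx => hzero x ⟨hx.1, fun h => hx.2 ⟨hx.1, h⟩⟩]
  exact setIntegral_mono_set hft hf inter_subset_right.eventuallyLE

theorem setIntegral_le_of_measure_eq_of_eq_max {M : ℝ} (hs : MeasurableSet s)
    (ht : MeasurableSet t) (hμ : μ s = μ t) (hfin : μ s ≠ ∞)
    (hfs : IntegrableOn f s μ) (hft : IntegrableOn f t μ)
    (hle : ∀ x ∈ t \ s, f x ≤ M) (heq : ∀ x ∈ s \ t, f x = M) :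
    ∫ x in t, f x ∂μ ≤ ∫ x in s, f x ∂μ := by
  have hsdiff : μ (s \ t) = μ (t \ s) :=
    measure_sdiff_symm hs.nullMeasurableSet ht.nullMeasurableSet hμ
      (measure_ne_top_of_subset inter_subset_left hfin)
  have hts_fin : μ (t \ s) ≠ ∞ := measure_ne_top_of_subset sdiff_subset (hμ ▸ hfin)
  have hmove : ∫ x in t \ s, f x ∂μ ≤ ∫ x in s \ t, f x ∂μ :=
    calc ∫ x in t \ s, f x ∂μ ≤ ∫ _ in t \ s, M ∂μ :=
          setIntegral_mono_on (hft.mono_set sdiff_subset) (integrableOn_const hts_fin)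
            (ht.diff hs) hle
      _ = ∫ x in s \ t, f x ∂μ := by
          rw [setIntegral_congr_fun (hs.diff ht) heq, setIntegral_const, setIntegral_const,
            measureReal_def, measureReal_def, hsdiff]
  rw [← integral_inter_add_sdiff hs hft, ← integral_inter_add_sdiff ht hfs, inter_comm]
  gcongr

theorem setIntegral_prod_fun_fst {β : Type*} [MeasurableSpace β] {ν : Measure β}
    [SFinite ν] [SFinite μ] (g : α → ℝ) (s : Set α) (t : Set β) :
    ∫ z in s ×ˢ t, g z.1 ∂μ.prod ν = (∫ x in s, g x ∂μ) * ν.real t := by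
  simpa using setIntegral_prod_mul (μ := μ) (ν := ν) g (fun _ => 1) s t

theorem integrableOn_fun_fst_sq {β : Type*} [MeasurableSpace β] {μ : Measure (α × β)}
    {g : α → ℝ} (hg : Measurable g) {C : ℝ} (hC : ∀ x, g x ^ 2 ≤ C) {s : Set (α × β)}
    (hs : μ s ≠ ∞) : IntegrableOn (fun z => g z.1 ^ 2) s μ :=
  Measure.integrableOn_of_bounded hs ((hg.comp measurable_fst).pow_const 2).aestronglyMeasurable
    (ae_of_all _ fun z => by simpa [Real.norm_of_nonneg (sq_nonneg _)] using hC z.1)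

end SetIntegral

theorem fst_notMem_of_mem_sdiff_prod {α β : Type*} {Ω : Set (α × β)} {s : Set α} {t : Set β}
    (hΩt : Ω ⊆ {q | q.2 ∈ t}) {q : α × β} (hq : q ∈ Ω \ s ×ˢ t) : q.1 ∉ s :=
  fun h => hq.2 ⟨h, hΩt hq.1⟩

theorem HasDerivAt.of_nhdsLE_of_nhdsGE {E : Type*} [NormedAddCommGroup E] [NormedSpace ℝ E]
    {f g h : ℝ → E} {f' : E} {a : ℝ} (hg : HasDerivAt g f' a) (hh : HasDerivAt h f' a)
    (hfg : f =ᶠ[𝓝[≤] a] g) (hfh : f =ᶠ[𝓝[≥] a] h) : HasDerivAt f f' a := by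
  have := (hg.hasDerivWithinAt.congr_of_eventuallyEq hfg (hfg.eq_of_nhdsWithin (le_refl a))).union
    (hh.hasDerivWithinAt.congr_of_eventuallyEq hfh (hfh.eq_of_nhdsWithin (le_refl a)))
  rwa [Iic_union_Ici, hasDerivWithinAt_univ] at this

theorem HasDerivAt.fderiv_comp_fst_sq_add {f : ℝ → ℝ} {f' : ℝ} {q : ℝ × ℝ}
    (hf : HasDerivAt f f' q.1) :
    fderiv ℝ (fun p : ℝ × ℝ => f p.1) q (1, 0) ^ 2
      + fderiv ℝ (fun p : ℝ × ℝ => f p.1) q (0, 1) ^ 2 = f' ^ 2 := by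
  change fderiv ℝ (f ∘ Prod.fst) q (1, 0) ^ 2 + fderiv ℝ (f ∘ Prod.fst) q (0, 1) ^ 2 = _
  rw [(hf.comp_hasFDerivAt q hasFDerivAt_fst).fderiv]
  simp

noncomputable def sineStep (L x : ℝ) : ℝ :=
  if x < -(L / 2) then -1 else if x ≤ L / 2 then sin (π * x / L) else 1

noncomputable def sineStepDeriv (L x : ℝ) : ℝ :=
  if x ∈ Icc (-(L / 2)) (L / 2) then π / L * cos (π * x / L) else 0

section SineStep

variable {L x : ℝ}

theorem pi_mul_half_div (hL : L ≠ 0) : π * (L / 2) / L = π / 2 := by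
  field_simp

theorem pi_mul_neg_half_div (hL : L ≠ 0) : π * -(L / 2) / L = -(π / 2) := by
  field_simp

theorem hasDerivAt_sin_pi_mul_div (x : ℝ) :
    HasDerivAt (fun x => sin (π * x / L)) (π / L * cos (π * x / L)) x := by
  simpa [mul_comm, mul_div_assoc] using ((hasDerivAt_id x).const_mul π |>.div_const L).sin

theorem sineStep_eqOn_Icc :
    EqOn (sineStep L) (fun x => sin (π * x / L)) (Icc (-(L / 2)) (L / 2)) :=
  fun x hx => by simp [sineStep, not_lt.2 hx.1, hx.2]

theorem sineStep_eqOn_Iic (hL : 0 < L) : EqOn (sineStep L) (fun _ => -1) (Iic (-(L / 2))) := by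
  intro x hx
  rcases (mem_Iic.1 hx).lt_or_eq with hlt | rfl
  · simp [sineStep, hlt]
  · rw [sineStep_eqOn_Icc ⟨le_rfl, by linarith⟩]
    simp only [pi_mul_neg_half_div hL.ne', sin_neg, sin_pi_div_two]

theorem sineStep_eqOn_Ici (hL : 0 < L) : EqOn (sineStep L) (fun _ => 1) (Ici (L / 2)) := by
  intro x hx
  rcases (mem_Ici.1 hx).lt_or_eq with hlt | rfl
  · simp [sineStep, hlt, not_lt.2 (by linarith : -(L / 2) ≤ x)]
  · rw [sineStep_eqOn_Icc ⟨by linarith, le_rfl⟩]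
    simp only [pi_mul_half_div hL.ne', sin_pi_div_two]

theorem sineStepDeriv_of_mem (hx : x ∈ Icc (-(L / 2)) (L / 2)) :
    sineStepDeriv L x = π / L * cos (π * x / L) := if_pos hx

theorem sineStepDeriv_of_notMem (hx : x ∉ Icc (-(L / 2)) (L / 2)) : sineStepDeriv L x = 0 :=
  if_neg hx

-- At `±L / 2` the sine branch has slope `cos (±π / 2) = 0`, matching the constant branch.
theorem hasDerivAt_sineStep (hL : 0 < L) (x : ℝ) :
    HasDerivAt (sineStep L) (sineStepDeriv L x) x := by
  rcases lt_or_ge x (-(L / 2)) with hlt | hge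
  · rw [sineStepDeriv_of_notMem fun h => (not_le.2 hlt) h.1]
    exact (hasDerivAt_const x _).congr_of_eventuallyEq
      ((sineStep_eqOn_Iic hL).eventuallyEq_of_mem (Iic_mem_nhds hlt))
  rcases lt_or_ge (L / 2) x with hgt | hle
  · rw [sineStepDeriv_of_notMem fun h => (not_le.2 hgt) h.2]
    exact (hasDerivAt_const x _).congr_of_eventuallyEq
      ((sineStep_eqOn_Ici hL).eventuallyEq_of_mem (Ici_mem_nhds hgt))
  rw [sineStepDeriv_of_mem ⟨hge, hle⟩]
  have hwidth : -(L / 2) < L / 2 := by linarith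
  rcases hge.lt_or_eq with hgt' | rfl
  · rcases hle.lt_or_eq with hlt' | rfl
    · exact (hasDerivAt_sin_pi_mul_div x).congr_of_eventuallyEq
        (sineStep_eqOn_Icc.eventuallyEq_of_mem (Icc_mem_nhds hgt' hlt'))
    · refine .of_nhdsLE_of_nhdsGE (hasDerivAt_sin_pi_mul_div _) ?_
        (sineStep_eqOn_Icc.eventuallyEq_of_mem (Icc_mem_nhdsLE hwidth))
        ((sineStep_eqOn_Ici hL).eventuallyEq_of_mem self_mem_nhdsWithin)
      rw [pi_mul_half_div hL.ne', cos_pi_div_two, mul_zero]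
      exact hasDerivAt_const _ 1
  · refine .of_nhdsLE_of_nhdsGE ?_ (hasDerivAt_sin_pi_mul_div _)
      ((sineStep_eqOn_Iic hL).eventuallyEq_of_mem self_mem_nhdsWithin)
      (sineStep_eqOn_Icc.eventuallyEq_of_mem (Icc_mem_nhdsGE hwidth))
    rw [pi_mul_neg_half_div hL.ne', cos_neg, cos_pi_div_two, mul_zero]
    exact hasDerivAt_const _ (-1)

theorem continuous_sineStep (hL : 0 < L) : Continuous (sineStep L) :=
  continuous_iff_continuousAt.2 fun x => (hasDerivAt_sineStep hL x).continuousAt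

theorem measurable_sineStepDeriv : Measurable (sineStepDeriv L) :=
  Measurable.ite measurableSet_Icc (by fun_prop) measurable_const

theorem sineStep_sq_le_one : sineStep L x ^ 2 ≤ 1 := by
  unfold sineStep
  split_ifs <;> simp [abs_sin_le_one]

theorem sineStep_sq_of_notMem (hL : 0 < L) (hx : x ∉ Icc (-(L / 2)) (L / 2)) :
    sineStep L x ^ 2 = 1 := by
  rcases not_and_or.1 hx with hlt | hgt
  · rw [sineStep_eqOn_Iic hL (not_le.1 hlt).le]; norm_num
  · rw [sineStep_eqOn_Ici hL (not_le.1 hgt).le]; norm_num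

theorem sineStepDeriv_sq_le : sineStepDeriv L x ^ 2 ≤ (π / L) ^ 2 := by
  unfold sineStepDeriv
  split_ifs
  · rw [mul_pow]
    exact mul_le_of_le_one_right (sq_nonneg _) (cos_sq_le_one _)
  · simp [sq_nonneg]

theorem integral_comp_pi_mul_div (hL : 0 < L) (f : ℝ → ℝ) :
    ∫ x in -(L / 2)..L / 2, f (π * x / L) = L / π * ∫ y in -(π / 2)..π / 2, f y := by
  have := intervalIntegral.integral_comp_div f (by positivity : L / π ≠ 0)
    (a := -(L / 2)) (b := L / 2)
  simp only [div_div_eq_mul_div, mul_comm _ π] at this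
  rw [this, pi_mul_neg_half_div hL.ne', pi_mul_half_div hL.ne', smul_eq_mul]

theorem integral_Icc_sineStep_sq (hL : 0 < L) :
    ∫ x in Icc (-(L / 2)) (L / 2), sineStep L x ^ 2 = L / 2 := by
  rw [setIntegral_congr_fun measurableSet_Icc
      fun x hx => by rw [sineStep_eqOn_Icc hx],
    integral_Icc_eq_integral_Ioc, ← intervalIntegral.integral_of_le (by linarith),
    integral_comp_pi_mul_div hL (fun y => sin y ^ 2), integral_sin_sq]
  simp only [sin_neg, cos_neg, cos_pi_div_two]
  field_simp
  ring

theorem integral_Icc_sineStepDeriv_sq (hL : 0 < L) :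
    ∫ x in Icc (-(L / 2)) (L / 2), sineStepDeriv L x ^ 2 = π ^ 2 / (2 * L) := by
  rw [setIntegral_congr_fun measurableSet_Icc
      fun x hx => by rw [sineStepDeriv_of_mem hx, mul_pow],
    integral_Icc_eq_integral_Ioc, ← intervalIntegral.integral_of_le (by linarith),
    intervalIntegral.integral_const_mul,
    integral_comp_pi_mul_div hL (fun y => cos y ^ 2), integral_cos_sq]
  simp only [sin_neg, cos_neg, cos_pi_div_two]
  field_simp
  ring

end SineStep

section StripDomain

variable {L : ℝ} {Ω : Set (ℝ × ℝ)} {t : Set ℝ}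

theorem volume_Icc_prod_ne_top (a b : ℝ) (ht : volume t ≠ ∞) :
    volume (Icc a b ×ˢ t) ≠ ∞ := by
  rw [Measure.volume_eq_prod, Measure.prod_prod]
  exact ENNReal.mul_ne_top measure_Icc_lt_top.ne ht

theorem setIntegral_Icc_prod_sineStep_sq (hL : 0 < L) (t : Set ℝ) :
    ∫ q in Icc (-(L / 2)) (L / 2) ×ˢ t, sineStep L q.1 ^ 2 = L / 2 * volume.real t := by
  rw [Measure.volume_eq_prod, setIntegral_prod_fun_fst (fun x => sineStep L x ^ 2),
    integral_Icc_sineStep_sq hL]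

theorem setIntegral_Icc_prod_sineStepDeriv_sq (hL : 0 < L) (t : Set ℝ) :
    ∫ q in Icc (-(L / 2)) (L / 2) ×ˢ t, sineStepDeriv L q.1 ^ 2
      = π ^ 2 / (2 * L) * volume.real t := by
  rw [Measure.volume_eq_prod, setIntegral_prod_fun_fst (fun x => sineStepDeriv L x ^ 2),
    integral_Icc_sineStepDeriv_sq hL]

theorem setIntegral_sineStepDeriv_sq_le (hΩ : MeasurableSet Ω) (hΩt : Ω ⊆ {q | q.2 ∈ t})
    (ht : volume t ≠ ∞) :
    ∫ q in Ω, sineStepDeriv L q.1 ^ 2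
      ≤ ∫ q in Icc (-(L / 2)) (L / 2) ×ˢ t, sineStepDeriv L q.1 ^ 2 :=
  setIntegral_le_of_eq_zero_on_sdiff hΩ
    (integrableOn_fun_fst_sq measurable_sineStepDeriv (fun _ => sineStepDeriv_sq_le)
      (volume_Icc_prod_ne_top _ _ ht))
    (ae_of_all _ fun _ => sq_nonneg _)
    fun _ hq => by
      rw [sineStepDeriv_of_notMem (fst_notMem_of_mem_sdiff_prod hΩt hq), sq, mul_zero]

theorem setIntegral_sineStep_sq_le (hL : 0 < L) (hΩ : MeasurableSet Ω) (ht : MeasurableSet t)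
    (hΩt : Ω ⊆ {q | q.2 ∈ t}) (hvol : volume Ω = volume (Icc (-(L / 2)) (L / 2) ×ˢ t))
    (hfin : volume t ≠ ∞) :
    ∫ q in Icc (-(L / 2)) (L / 2) ×ˢ t, sineStep L q.1 ^ 2
      ≤ ∫ q in Ω, sineStep L q.1 ^ 2 := by
  have hRfin := volume_Icc_prod_ne_top (-(L / 2)) (L / 2) hfin
  have hint {s : Set (ℝ × ℝ)} (hs : volume s ≠ ∞) :
      IntegrableOn (fun q => sineStep L q.1 ^ 2) s :=
    integrableOn_fun_fst_sq (continuous_sineStep hL).measurable (fun _ => sineStep_sq_le_one) hs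
  exact setIntegral_le_of_measure_eq_of_eq_max hΩ (measurableSet_Icc.prod ht) hvol
    (hvol ▸ hRfin) (hint (hvol ▸ hRfin)) (hint hRfin) (fun _ _ => sineStep_sq_le_one)
    fun _ hq => sineStep_sq_of_notMem hL (fst_notMem_of_mem_sdiff_prod hΩt hq)

end StripDomain

theorem stmt_5_general (w L : ℝ) (hw : 0 < w) (hL : 0 < L)
    (Ω : Set (ℝ × ℝ)) (hopen : IsOpen Ω)
    (hstrip : Ω ⊆ {q : ℝ × ℝ | q.2 ∈ Set.Icc (-(w/2)) (w/2)})
    (harea : (volume Ω).toReal = w * L)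
    (u : ℝ × ℝ → ℝ)
    (hu : ∀ q : ℝ × ℝ, u q =
      if q.1 < -(L/2) then -1
      else if q.1 ≤ L/2 then Real.sin (π * q.1 / L)
      else 1)
    (R : Set (ℝ × ℝ))
    (hR : R = Set.Icc (-(L/2)) (L/2) ×ˢ Set.Icc (-(w/2)) (w/2)) :
    (∫ q in Ω, (((fderiv ℝ u q) (1, 0)) ^ 2 + ((fderiv ℝ u q) (0, 1)) ^ 2))
      ≤ (∫ q in R, (((fderiv ℝ u q) (1, 0)) ^ 2 + ((fderiv ℝ u q) (0, 1)) ^ 2)) ∧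
    (∫ q in R, (u q) ^ 2) ≤ (∫ q in Ω, (u q) ^ 2) ∧
    (∫ q in Ω, (((fderiv ℝ u q) (1, 0)) ^ 2 + ((fderiv ℝ u q) (0, 1)) ^ 2)) /
      (∫ q in Ω, (u q) ^ 2) ≤ π ^ 2 / L ^ 2 := by
  obtain rfl : u = fun q => sineStep L q.1 := funext hu
  have hgrad (q : ℝ × ℝ) : fderiv ℝ (fun q : ℝ × ℝ => sineStep L q.1) q (1, 0) ^ 2
      + fderiv ℝ (fun q : ℝ × ℝ => sineStep L q.1) q (0, 1) ^ 2 = sineStepDeriv L q.1 ^ 2 :=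
    (hasDerivAt_sineStep hL q.1).fderiv_comp_fst_sq_add
  simp only [hgrad]
  subst hR
  have hΩfin : volume Ω ≠ ∞ := (ENNReal.toReal_pos_iff.1 (harea ▸ mul_pos hw hL)).2.ne
  have hvolΩ : volume Ω = volume (Icc (-(L / 2)) (L / 2) ×ˢ Icc (-(w / 2)) (w / 2)) := by
    rw [← ENNReal.ofReal_toReal hΩfin, harea, Measure.volume_eq_prod, Measure.prod_prod,
      Real.volume_Icc, Real.volume_Icc, ← ENNReal.ofReal_mul (by linarith)]
    ring_nf
  have hgradΩR := setIntegral_sineStepDeriv_sq_le (L := L) hopen.measurableSet hstrip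
    measure_Icc_lt_top.ne
  have hL2ΩR := setIntegral_sineStep_sq_le hL hopen.measurableSet measurableSet_Icc hstrip hvolΩ
    measure_Icc_lt_top.ne
  have hwidth : volume.real (Icc (-(w / 2)) (w / 2)) = w := by
    rw [Real.volume_real_Icc_of_le (by linarith)]; ring
  rw [setIntegral_Icc_prod_sineStepDeriv_sq hL, hwidth] at hgradΩR ⊢
  rw [setIntegral_Icc_prod_sineStep_sq hL, hwidth] at hL2ΩR ⊢
  refine ⟨hgradΩR, hL2ΩR, ?_⟩
  calc _ ≤ (π ^ 2 / (2 * L) * w) / (L / 2 * w) :=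
        div_le_div₀ (by positivity) hgradΩR (by positivity) hL2ΩR
    _ = π ^ 2 / L ^ 2 := by field_simp

theorem stmt_5 (w L : ℝ) (hw : 0 < w) (hL : 0 < L)
    (Ω : Set (ℝ × ℝ)) (hopen : IsOpen Ω) (hbdd : Bornology.IsBounded Ω)
    (hstrip : Ω ⊆ {q : ℝ × ℝ | q.2 ∈ Set.Icc (-(w/2)) (w/2)})
    (harea : (volume Ω).toReal = w * L)
    (u : ℝ × ℝ → ℝ)
    (hu : ∀ q : ℝ × ℝ, u q =
      if q.1 < -(L/2) then -1
      else if q.1 ≤ L/2 then Real.sin (π * q.1 / L)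
      else 1)
    (R : Set (ℝ × ℝ))
    (hR : R = Set.Icc (-(L/2)) (L/2) ×ˢ Set.Icc (-(w/2)) (w/2)) :
    (∫ q in Ω, (((fderiv ℝ u q) (1, 0)) ^ 2 + ((fderiv ℝ u q) (0, 1)) ^ 2))
      ≤ (∫ q in R, (((fderiv ℝ u q) (1, 0)) ^ 2 + ((fderiv ℝ u q) (0, 1)) ^ 2)) ∧
    (∫ q in R, (u q) ^ 2) ≤ (∫ q in Ω, (u q) ^ 2) ∧
    (∫ q in Ω, (((fderiv ℝ u q) (1, 0)) ^ 2 + ((fderiv ℝ u q) (0, 1)) ^ 2)) /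
      (∫ q in Ω, (u q) ^ 2) ≤ π ^ 2 / L ^ 2 :=
  stmt_5_general w L hw hL Ω hopen hstrip harea u hu R hR
end

section
/- Let θ ∈ (0, π/2) and consider the function g(α) = sin²(α + θ/2) / (sin(α + θ)·sin(α)) on the interval [π/2 − θ, π/2]. Then g(α) = (1 − cos(2α + θ)) / (cos(θ) − cos(2α + θ)) for all such α, g is nonincreasing on [π/2 − θ, π/2 − θ/2] and nondecreasing on [π/2 − θ/2, π/2], and its maximum on [π/2 − θ, π/2] equals g(π/2) = g(π/2 − θ) = cos²(θ/2)/cos(θ). -/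
open Real

private lemma frac_mono_aux (t ca cb : ℝ) (ht : 0 < t) (ht1 : t ≤ 1)
    (ha : ca ≤ -t) (hb : cb ≤ -t) (hab : cb ≤ ca) :
    (1 - cb) / (t - cb) ≤ (1 - ca) / (t - ca) := by
  have h1 : 0 < t - ca := by linarith
  have h2 : 0 < t - cb := by linarith
  rw [div_le_div_iff₀ h2 h1]
  nlinarith

theorem stmt_6 (θ : ℝ) (hθ : θ ∈ Set.Ioo 0 (π / 2)) (g : ℝ → ℝ)
    (hg : ∀ α, g α = Real.sin (α + θ / 2) ^ 2 / (Real.sin (α + θ) * Real.sin α)) :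
    (∀ α ∈ Set.Icc (π / 2 - θ) (π / 2),
      g α = (1 - Real.cos (2 * α + θ)) / (Real.cos θ - Real.cos (2 * α + θ))) ∧
    AntitoneOn g (Set.Icc (π / 2 - θ) (π / 2 - θ / 2)) ∧
    MonotoneOn g (Set.Icc (π / 2 - θ / 2) (π / 2)) ∧
    (∀ α ∈ Set.Icc (π / 2 - θ) (π / 2), g α ≤ Real.cos (θ / 2) ^ 2 / Real.cos θ) ∧
    g (π / 2) = Real.cos (θ / 2) ^ 2 / Real.cos θ ∧
    g (π / 2 - θ) = Real.cos (θ / 2) ^ 2 / Real.cos θ := by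
  obtain ⟨hθ0, hθ2⟩ := hθ
  have hπ := Real.pi_pos
  have hθπ : θ < π := by linarith
  have hcθ : 0 < Real.cos θ := Real.cos_pos_of_mem_Ioo ⟨by linarith, hθ2⟩
  have hcθ1 : Real.cos θ ≤ 1 := Real.cos_le_one θ
  -- key identity, valid for all α
  have key : ∀ α, g α = (1 - Real.cos (2 * α + θ)) / (Real.cos θ - Real.cos (2 * α + θ)) := by
    intro α
    have h1 : Real.cos θ - Real.cos (2 * α + θ) = 2 * (Real.sin (α + θ) * Real.sin α) := by
      have e1 := Real.cos_add (α + θ) α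
      have e2 := Real.cos_sub (α + θ) α
      have r1 : α + θ + α = 2 * α + θ := by ring
      have r2 : α + θ - α = θ := by ring
      rw [r1] at e1; rw [r2] at e2
      linarith
    have h2 : 1 - Real.cos (2 * α + θ) = 2 * Real.sin (α + θ / 2) ^ 2 := by
      have e1 := Real.cos_two_mul (α + θ / 2)
      have e2 := Real.sin_sq_add_cos_sq (α + θ / 2)
      have r1 : 2 * (α + θ / 2) = 2 * α + θ := by ring
      rw [r1] at e1
      linarith
    rw [hg, h1, h2, mul_div_mul_left _ _ (two_ne_zero)]
  -- bound on cos(2α+θ) on the whole interval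
  have cbound : ∀ α ∈ Set.Icc (π / 2 - θ) (π / 2), Real.cos (2 * α + θ) ≤ -Real.cos θ := by
    rintro α ⟨h1, h2⟩
    rcases le_total (2 * α + θ) π with h | h
    · have := Real.cos_le_cos_of_nonneg_of_le_pi (by linarith : (0:ℝ) ≤ π - θ) h
        (by linarith : π - θ ≤ 2 * α + θ)
      rwa [Real.cos_pi_sub] at this
    · have r : 2 * α + θ = (2 * α + θ - π) + π := by ring
      rw [r, Real.cos_add_pi]
      have := Real.cos_le_cos_of_nonneg_of_le_pi (by linarith : (0:ℝ) ≤ 2 * α + θ - π)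
        (le_of_lt hθπ) (by linarith : 2 * α + θ - π ≤ θ)
      linarith
  -- antitone part
  have hanti : AntitoneOn g (Set.Icc (π / 2 - θ) (π / 2 - θ / 2)) := by
    rintro a ⟨ha1, ha2⟩ b ⟨hb1, hb2⟩ hab
    rw [key a, key b]
    have hcb_le_ca : Real.cos (2 * b + θ) ≤ Real.cos (2 * a + θ) :=
      Real.cos_le_cos_of_nonneg_of_le_pi (by linarith) (by linarith) (by linarith)
    have hca : Real.cos (2 * a + θ) ≤ -Real.cos θ :=
      cbound a ⟨ha1, by linarith⟩
    have hcb : Real.cos (2 * b + θ) ≤ -Real.cos θ :=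
      cbound b ⟨hb1, by linarith⟩
    exact frac_mono_aux _ _ _ hcθ hcθ1 hca hcb hcb_le_ca
  -- monotone part
  have hmono : MonotoneOn g (Set.Icc (π / 2 - θ / 2) (π / 2)) := by
    rintro a ⟨ha1, ha2⟩ b ⟨hb1, hb2⟩ hab
    rw [key a, key b]
    have hca_le_cb : Real.cos (2 * a + θ) ≤ Real.cos (2 * b + θ) := by
      have ra : 2 * a + θ = (2 * a + θ - π) + π := by ring
      have rb : 2 * b + θ = (2 * b + θ - π) + π := by ring
      rw [ra, rb, Real.cos_add_pi, Real.cos_add_pi]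
      have := Real.cos_le_cos_of_nonneg_of_le_pi
        (by linarith : (0:ℝ) ≤ 2 * a + θ - π) (by linarith : 2 * b + θ - π ≤ π)
        (by linarith : 2 * a + θ - π ≤ 2 * b + θ - π)
      linarith
    have hca : Real.cos (2 * a + θ) ≤ -Real.cos θ :=
      cbound a ⟨by linarith, ha2⟩
    have hcb : Real.cos (2 * b + θ) ≤ -Real.cos θ :=
      cbound b ⟨by linarith, hb2⟩
    exact frac_mono_aux _ _ _ hcθ hcθ1 hcb hca hca_le_cb
  -- endpoint values
  have htop : g (π / 2) = Real.cos (θ / 2) ^ 2 / Real.cos θ := by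
    rw [key]
    have r : 2 * (π / 2) + θ = θ + π := by ring
    rw [r, Real.cos_add_pi]
    have hsq : Real.cos (θ / 2) ^ 2 = (1 + Real.cos θ) / 2 := by
      have e := Real.cos_sq (θ / 2)
      rw [show 2 * (θ / 2) = θ by ring] at e
      linarith
    rw [hsq, div_div]
    congr 1 <;> ring
  have hbot : g (π / 2 - θ) = Real.cos (θ / 2) ^ 2 / Real.cos θ := by
    rw [key]
    have r : 2 * (π / 2 - θ) + θ = π - θ := by ring
    rw [r, Real.cos_pi_sub]
    have hsq : Real.cos (θ / 2) ^ 2 = (1 + Real.cos θ) / 2 := by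
      have e := Real.cos_sq (θ / 2)
      rw [show 2 * (θ / 2) = θ by ring] at e
      linarith
    rw [hsq, div_div]
    congr 1 <;> ring
  refine ⟨fun α _ => key α, hanti, hmono, ?_, htop, hbot⟩
  rintro α ⟨h1, h2⟩
  rcases le_total α (π / 2 - θ / 2) with h | h
  · have := hanti ⟨le_refl _, by linarith⟩ ⟨h1, h⟩ h1
    rw [hbot] at this
    exact this
  · have := hmono ⟨h, h2⟩ ⟨by linarith, le_refl _⟩ h2
    rw [htop] at this
    exact this
end

section
/- Let σ₁ be the affine map σ₁(x,y) = (x/2 + (√3/2)y − 1/4, (√3/2)x − y/2 + √3/4) and let u₁(x,y) = sin(4πx/3) + 2·cos(2πy/√3)·sin(2πx/3). Then for all (x,y) ∈ ℝ²: u₁(σ₁(x,y)) = −u₁(x+1, y). Similarly, with σ₂(x,y) = (x/2 − (√3/2)y + 1/4, −(√3/2)x − y/2 + √3/4), one has u₁(σ₂(x,y)) = −u₁(x−1, y). -/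
open Real

private lemma two_cs (A B : ℝ) :
    2 * Real.cos A * Real.sin B = Real.sin (A + B) - Real.sin (A - B) := by
  rw [Real.sin_add, Real.sin_sub]; ring

private lemma key1 (a b : ℝ) :
    Real.sin (a + b - π/3) +
      2 * Real.cos (3*a/2 - b/2 + π/2) * Real.sin (a/2 + b/2 - π/6)
    = -(Real.sin (2*a + 4*π/3) + 2 * Real.cos b * Real.sin (a + 2*π/3)) := by
  have t1 := two_cs (3*a/2 - b/2 + π/2) (a/2 + b/2 - π/6)
  have t2 := two_cs b (a + 2*π/3)
  have h1 : Real.sin (3*a/2 - b/2 + π/2 + (a/2 + b/2 - π/6)) = Real.sin (2*a + π/3) := by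
    congr 1; ring
  have h2 : Real.sin (3*a/2 - b/2 + π/2 - (a/2 + b/2 - π/6)) = Real.sin (a - b + 2*π/3) := by
    congr 1; ring
  have h3 : Real.sin (2*a + 4*π/3) = -Real.sin (2*a + π/3) := by
    rw [show (2*a + 4*π/3) = (2*a + π/3) + π by ring, Real.sin_add_pi]
  have h4 : Real.sin (b + (a + 2*π/3)) = -Real.sin (a + b - π/3) := by
    rw [show (b + (a + 2*π/3)) = (a + b - π/3) + π by ring, Real.sin_add_pi]
  have h5 : Real.sin (b - (a + 2*π/3)) = -Real.sin (a - b + 2*π/3) := by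
    rw [show (b - (a + 2*π/3)) = -(a - b + 2*π/3) by ring, Real.sin_neg]
  rw [t1, t2, h1, h2, h3, h4, h5]; ring

private lemma key2 (a b : ℝ) :
    Real.sin (a - b + π/3) +
      2 * Real.cos (-(3*a/2) - b/2 + π/2) * Real.sin (a/2 - b/2 + π/6)
    = -(Real.sin (2*a - 4*π/3) + 2 * Real.cos b * Real.sin (a - 2*π/3)) := by
  have t1 := two_cs (-(3*a/2) - b/2 + π/2) (a/2 - b/2 + π/6)
  have t2 := two_cs b (a - 2*π/3)
  have h1 : Real.sin (-(3*a/2) - b/2 + π/2 + (a/2 - b/2 + π/6))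
      = Real.sin (-a - b + 2*π/3) := by congr 1; ring
  have h2 : Real.sin (-(3*a/2) - b/2 + π/2 - (a/2 - b/2 + π/6))
      = Real.sin (-(2*a) + π/3) := by congr 1; ring
  have h2' : Real.sin (-(2*a) + π/3) = -Real.sin (2*a - π/3) := by
    rw [show (-(2*a) + π/3) = -(2*a - π/3) by ring, Real.sin_neg]
  have h3 : Real.sin (2*a - 4*π/3) = -Real.sin (2*a - π/3) := by
    rw [show (2*a - π/3) = (2*a - 4*π/3) + π by ring, Real.sin_add_pi]; ring
  have h4 : Real.sin (b + (a - 2*π/3)) = -Real.sin (a + b + π/3) := by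
    rw [show (a + b + π/3) = (b + (a - 2*π/3)) + π by ring, Real.sin_add_pi]; ring
  have h5 : Real.sin (b - (a - 2*π/3)) = Real.sin (a - b + π/3) := by
    rw [show (b - (a - 2*π/3)) = π - (a - b + π/3) by ring, Real.sin_pi_sub]
  have h6 : Real.sin (-a - b + 2*π/3) = Real.sin (a + b + π/3) := by
    rw [show (-a - b + 2*π/3) = π - (a + b + π/3) by ring, Real.sin_pi_sub]
  rw [t1, t2, h1, h2, h2', h3, h4, h5, h6]; ring

theorem stmt_12 (u : ℝ → ℝ → ℝ)
    (hu : ∀ x y, u x y = Real.sin (4 * π * x / 3) +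
      2 * Real.cos (2 * π * y / Real.sqrt 3) * Real.sin (2 * π * x / 3))
    (σ₁ σ₂ : ℝ × ℝ → ℝ × ℝ)
    (hσ₁ : ∀ x y, σ₁ (x, y) = (x / 2 + Real.sqrt 3 / 2 * y - 1/4,
      Real.sqrt 3 / 2 * x - y / 2 + Real.sqrt 3 / 4))
    (hσ₂ : ∀ x y, σ₂ (x, y) = (x / 2 - Real.sqrt 3 / 2 * y + 1/4,
      -(Real.sqrt 3 / 2) * x - y / 2 + Real.sqrt 3 / 4)) :
    ∀ x y : ℝ,
      u (σ₁ (x, y)).1 (σ₁ (x, y)).2 = -u (x + 1) y ∧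
      u (σ₂ (x, y)).1 (σ₂ (x, y)).2 = -u (x - 1) y := by
  intro x y
  have s3 : Real.sqrt 3 ≠ 0 := by positivity
  have s33 : Real.sqrt 3 * Real.sqrt 3 = 3 := Real.mul_self_sqrt (by norm_num)
  set a : ℝ := 2 * π * x / 3 with ha
  set b : ℝ := 2 * π * y / Real.sqrt 3 with hb
  rw [hσ₁ x y, hσ₂ x y]
  simp only [hu]
  constructor
  · have e1 : 4 * π * (x / 2 + Real.sqrt 3 / 2 * y - 1/4) / 3 = a + b - π/3 := by
      rw [ha, hb]; field_simp; ring_nf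
      all_goals (rw [Real.sq_sqrt (by norm_num : (0:ℝ) ≤ 3)]; ring)
    have e2 : 2 * π * (Real.sqrt 3 / 2 * x - y / 2 + Real.sqrt 3 / 4) / Real.sqrt 3
        = 3*a/2 - b/2 + π/2 := by
      rw [ha, hb]; field_simp; ring_nf
      all_goals (rw [Real.sq_sqrt (by norm_num : (0:ℝ) ≤ 3)]; ring)
    have e3 : 2 * π * (x / 2 + Real.sqrt 3 / 2 * y - 1/4) / 3 = a/2 + b/2 - π/6 := by
      rw [ha, hb]; field_simp; ring_nf
      all_goals (rw [Real.sq_sqrt (by norm_num : (0:ℝ) ≤ 3)]; ring)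
    have e4 : 4 * π * (x + 1) / 3 = 2*a + 4*π/3 := by rw [ha]; ring
    have e5 : 2 * π * (x + 1) / 3 = a + 2*π/3 := by rw [ha]; ring
    rw [e1, e2, e3, e4, e5]
    exact key1 a b
  · have e1 : 4 * π * (x / 2 - Real.sqrt 3 / 2 * y + 1/4) / 3 = a - b + π/3 := by
      rw [ha, hb]; field_simp; ring_nf
      all_goals (rw [Real.sq_sqrt (by norm_num : (0:ℝ) ≤ 3)]; ring)
    have e2 : 2 * π * (-(Real.sqrt 3 / 2) * x - y / 2 + Real.sqrt 3 / 4) / Real.sqrt 3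
        = -(3*a/2) - b/2 + π/2 := by
      rw [ha, hb]; field_simp; ring_nf
      all_goals (rw [Real.sq_sqrt (by norm_num : (0:ℝ) ≤ 3)]; ring)
    have e3 : 2 * π * (x / 2 - Real.sqrt 3 / 2 * y + 1/4) / 3 = a/2 - b/2 + π/6 := by
      rw [ha, hb]; field_simp; ring_nf
      all_goals (rw [Real.sq_sqrt (by norm_num : (0:ℝ) ≤ 3)]; ring)
    have e4 : 4 * π * (x - 1) / 3 = 2*a - 4*π/3 := by rw [ha]; ring
    have e5 : 2 * π * (x - 1) / 3 = a - 2*π/3 := by rw [ha]; ring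
    rw [e1, e2, e3, e4, e5]
    exact key2 a b
end

section
/- Let u₁(x,y) = sin(4πx/3) + 2·cos(2πy/√3)·sin(2πx/3), and let σ₁, σ₂ be the reflections σ₁(x,y) = (x/2 + (√3/2)y − 1/4, (√3/2)x − y/2 + √3/4) and σ₂(x,y) = (x/2 − (√3/2)y + 1/4, −(√3/2)x − y/2 + √3/4). Then for all (x,y): u₁²(x,y) + u₁²(σ₁(x,y)) + u₁²(σ₂(x,y)) = 3·(3/2 + φ(x,y)), where φ(x,y) = cos(4πy/√3) − 2·cos(2πy/√3)·cos(2πx). -/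
open Real

lemma keyA (a b : ℝ) :
    (Real.sin (2*a) + 2*Real.cos b*Real.sin a)^2
    + (Real.sin (2*a + 4*π/3) + 2*Real.cos b*Real.sin (a + 2*π/3))^2
    + (Real.sin (2*a - 4*π/3) + 2*Real.cos b*Real.sin (a - 2*π/3))^2
    = 3*(3/2 + (Real.cos (2*b) - 2*Real.cos b*Real.cos (3*a))) := by
  simp only [show (2:ℝ)*a = a+a by ring, show (3:ℝ)*a = a+a+a by ring,
    show (2:ℝ)*b = b+b by ring, show (4:ℝ)*π/3 = π/6+π/6+π/6+π/6+π/6+π/6+π/6+π/6 by ring,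
    show (2:ℝ)*π/3 = π/6+π/6+π/6+π/6 by ring]
  simp only [Real.sin_add, Real.cos_add, Real.sin_sub, Real.cos_sub,
    Real.sin_pi_div_six, Real.cos_pi_div_six]
  linear_combination
    ((3/2:ℝ) + (6:ℝ) * Real.cos b ^ 2 + (3/2:ℝ) * Real.sin a ^ 2 + (3/2:ℝ) * Real.cos a ^ 2) * Real.sin_sq_add_cos_sq a
    + (3:ℝ) * Real.sin_sq_add_cos_sq b
    + ((21/32:ℝ) * Real.sin a ^ 2 * Real.cos b ^ 2 + (11/32:ℝ) * Real.sin a ^ 2 * Real.cos b ^ 2 * Real.sqrt 3 ^ 2 + (-9/32:ℝ) * Real.sin a ^ 2 * Real.cos b ^ 2 * Real.sqrt 3 ^ 4 + (1/32:ℝ) * Real.sin a ^ 2 * Real.cos b ^ 2 * Real.sqrt 3 ^ 6 + (1/2:ℝ) * Real.sin a ^ 4 + (85/512:ℝ) * Real.sin a ^ 4 * Real.sqrt 3 ^ 2 + (33/512:ℝ) * Real.sin a ^ 4 * Real.sqrt 3 ^ 4 + (-5/256:ℝ) * Real.sin a ^ 4 * Real.sqrt 3 ^ 6 + (15/256:ℝ)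 * Real.sin a ^ 4 * Real.sqrt 3 ^ 8 + (-11/512:ℝ) * Real.sin a ^ 4 * Real.sqrt 3 ^ 10 + (1/512:ℝ) * Real.sin a ^ 4 * Real.sqrt 3 ^ 12 + (853/256:ℝ) * Real.cos a * Real.sin a ^ 2 * Real.cos b + (301/256:ℝ) * Real.cos a * Real.sin a ^ 2 * Real.cos b * Real.sqrt 3 ^ 2 + (-11/128:ℝ) * Real.cos a * Real.sin a ^ 2 * Real.cos b * Real.sqrt 3 ^ 4 + (113/128:ℝ) * Real.cos a * Real.sin a ^ 2 * Real.cos b * Real.sqrt 3 ^ 6 + (-47/256:ℝ) * Real.cos a * Real.sin a ^ 2 * Real.cos b * Real.sqrt 3 ^ 8 + (1/256:ℝ) * Real.cos a * Real.sin a ^ 2 * Real.cos b * Real.sqrt 3 ^ 10 + (2:ℝ) * Real.cos a ^ 2 * Real.cos b ^ 2 + (1/2:ℝ) * Real.cos a ^ 2 * Real.cos b ^ 2 * Real.sqrt 3 ^ 2 + (1/2:ℝ) * Real.cos a ^ 2 * Real.cos b ^ 2 * Real.sqrt 3 ^ 4 + (-2731/8192:ℝ) * Real.cos a ^ 2 *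 Real.sin a ^ 2 + (-881/8192:ℝ) * Real.cos a ^ 2 * Real.sin a ^ 2 * Real.sqrt 3 ^ 2 + (-751/8192:ℝ) * Real.cos a ^ 2 * Real.sin a ^ 2 * Real.sqrt 3 ^ 4 + (1747/8192:ℝ) * Real.cos a ^ 2 * Real.sin a ^ 2 * Real.sqrt 3 ^ 6 + (-2641/8192:ℝ) * Real.cos a ^ 2 * Real.sin a ^ 2 * Real.sqrt 3 ^ 8 + (1117/8192:ℝ) * Real.cos a ^ 2 * Real.sin a ^ 2 * Real.sqrt 3 ^ 10 + (-85/8192:ℝ) * Real.cos a ^ 2 * Real.sin a ^ 2 * Real.sqrt 3 ^ 12 + (1/8192:ℝ) * Real.cos a ^ 2 * Real.sin a ^ 2 * Real.sqrt 3 ^ 14 + (-2:ℝ) * Real.cos a ^ 3 * Real.cos b + (-11/16:ℝ) * Real.cos a ^ 3 * Real.cos b * Real.sqrt 3 ^ 2 + (-1/16:ℝ) * Real.cos a ^ 3 * Real.cos b * Real.sqrt 3 ^ 4 + (-5/16:ℝ) * Real.cos a ^ 3 * Real.cos b * Real.sqrt 3 ^ 6 + (1/16:ℝ) * Real.cos a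 ^ 3 * Real.cos b * Real.sqrt 3 ^ 8 + (1/2:ℝ) * Real.cos a ^ 4 + (85/512:ℝ) * Real.cos a ^ 4 * Real.sqrt 3 ^ 2 + (33/512:ℝ) * Real.cos a ^ 4 * Real.sqrt 3 ^ 4 + (-5/256:ℝ) * Real.cos a ^ 4 * Real.sqrt 3 ^ 6 + (15/256:ℝ) * Real.cos a ^ 4 * Real.sqrt 3 ^ 8 + (-11/512:ℝ) * Real.cos a ^ 4 * Real.sqrt 3 ^ 10 + (1/512:ℝ) * Real.cos a ^ 4 * Real.sqrt 3 ^ 12) * (Real.sq_sqrt (by norm_num : (0:ℝ) ≤ 3))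

lemma keyS1 (t s : ℝ) :
    Real.sin (2*t+2*s-π/3) + 2*Real.cos (3*t-s+π/2)*Real.sin (t+s-π/6)
    = -(Real.sin (4*t+4*π/3) + 2*Real.cos (2*s)*Real.sin (2*t+2*π/3)) := by
  rw [show (2:ℝ)*t+2*s-π/3 = t+t+(s+s)-(π/6+π/6) by ring,
    show (3:ℝ)*t-s+π/2 = t+t+t-s+(π/6+π/6+π/6) by ring,
    show (4:ℝ)*t+4*π/3 = t+t+t+t+(π/6+π/6+π/6+π/6+π/6+π/6+π/6+π/6) by ring,
    show (2:ℝ)*t+2*π/3 = t+t+(π/6+π/6+π/6+π/6) by ring,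
    show (2:ℝ)*s = s+s by ring]
  simp only [Real.sin_add, Real.cos_add, Real.sin_sub, Real.cos_sub,
    Real.sin_pi_div_six, Real.cos_pi_div_six]
  linear_combination ((-1/2:ℝ) * Real.sqrt 3 + (1/2:ℝ) * Real.sin s ^ 2 * Real.sqrt 3 + (1/2:ℝ) * Real.cos s ^ 2 * Real.sqrt 3 + (-1/2:ℝ) * Real.sin t ^ 2 * Real.sqrt 3 + (1:ℝ) * Real.sin t ^ 2 * Real.cos s * Real.sin s + (1:ℝ) * Real.sin t ^ 2 * Real.cos s ^ 2 * Real.sqrt 3 + (2:ℝ) * Real.cos t * Real.sin t + (-3:ℝ) * Real.cos t * Real.sin t * Real.sin s ^ 2 + (-2:ℝ) * Real.cos t * Real.sin t * Real.cos s * Real.sin s * Real.sqrt 3 + (-1:ℝ) * Real.cos t * Real.sin t * Real.cos s ^ 2 + (7/2:ℝ) * Real.cos t ^ 2 * Real.sqrt 3 + (-3:ℝ) * Real.cos t ^ 2 * Real.sin s ^ 2 * Real.sqrt 3 + (-1:ℝ) * Real.cos t ^ 2 * Real.cos s * Real.sin s + (-4:ℝ) * Real.cos t ^ 2 * Real.cos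 s ^ 2 * Real.sqrt 3) * Real.sin_sq_add_cos_sq t
    + ((1/2:ℝ) * Real.sqrt 3 + (-2:ℝ) * Real.cos t * Real.sin t + (-4:ℝ) * Real.cos t ^ 2 * Real.sqrt 3 + (4:ℝ) * Real.cos t ^ 3 * Real.sin t + (4:ℝ) * Real.cos t ^ 4 * Real.sqrt 3) * Real.sin_sq_add_cos_sq s
    + ((1/2:ℝ) * Real.sin t ^ 2 * Real.sin s ^ 2 * Real.sqrt 3 + (-1/2:ℝ) * Real.sin t ^ 2 * Real.cos s * Real.sin s + (-1/2:ℝ) * Real.sin t ^ 2 * Real.cos s ^ 2 * Real.sqrt 3 + (-5/32:ℝ) * Real.sin t ^ 4 * Real.sqrt 3 + (-1/8:ℝ) * Real.sin t ^ 4 * Real.sqrt 3 ^ 3 + (1/32:ℝ) * Real.sin t ^ 4 * Real.sqrt 3 ^ 5 + (-1/8:ℝ) * Real.sin t ^ 4 * Real.sin s ^ 2 * Real.sqrt 3 + (3/8:ℝ) * Real.sin t ^ 4 * Real.cos s * Real.sin s + (-1/8:ℝ) * Real.sin t ^ 4 * Real.cos s * Real.sin s * Real.sqrt 3 ^ 2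 + (3/8:ℝ) * Real.sin t ^ 4 * Real.cos s ^ 2 * Real.sqrt 3 + (1/4:ℝ) * Real.cos t * Real.sin t * Real.sin s ^ 2 + (-1/4:ℝ) * Real.cos t * Real.sin t * Real.sin s ^ 2 * Real.sqrt 3 ^ 2 + (-1/4:ℝ) * Real.cos t * Real.sin t * Real.cos s ^ 2 + (1/4:ℝ) * Real.cos t * Real.sin t * Real.cos s ^ 2 * Real.sqrt 3 ^ 2 + (43/64:ℝ) * Real.cos t * Real.sin t ^ 3 + (5/64:ℝ) * Real.cos t * Real.sin t ^ 3 * Real.sqrt 3 ^ 2 + (25/64:ℝ) * Real.cos t * Real.sin t ^ 3 * Real.sqrt 3 ^ 4 + (-1/64:ℝ) * Real.cos t * Real.sin t ^ 3 * Real.sqrt 3 ^ 6 + (-9/8:ℝ) * Real.cos t * Real.sin t ^ 3 * Real.sin s ^ 2 + (-1/8:ℝ) * Real.cos t * Real.sin t ^ 3 * Real.sin s ^ 2 * Real.sqrt 3 ^ 2 + (-1:ℝ) * Real.cos t * Real.sin t ^ 3 * Real.cos s * Real.sin s * Real.sqrt 3 + (-3/8:ℝ) * Real.cos t * Real.sin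 t ^ 3 * Real.cos s ^ 2 + (-3/8:ℝ) * Real.cos t * Real.sin t ^ 3 * Real.cos s ^ 2 * Real.sqrt 3 ^ 2 + (-1/2:ℝ) * Real.cos t ^ 2 * Real.sin s ^ 2 * Real.sqrt 3 + (1/2:ℝ) * Real.cos t ^ 2 * Real.cos s * Real.sin s + (1/2:ℝ) * Real.cos t ^ 2 * Real.cos s ^ 2 * Real.sqrt 3 + (15/16:ℝ) * Real.cos t ^ 2 * Real.sin t ^ 2 * Real.sqrt 3 + (3/4:ℝ) * Real.cos t ^ 2 * Real.sin t ^ 2 * Real.sqrt 3 ^ 3 + (-3/16:ℝ) * Real.cos t ^ 2 * Real.sin t ^ 2 * Real.sqrt 3 ^ 5 + (-3/4:ℝ) * Real.cos t ^ 2 * Real.sin t ^ 2 * Real.sin s ^ 2 * Real.sqrt 3 + (-3/4:ℝ) * Real.cos t ^ 2 * Real.sin t ^ 2 * Real.cos s ^ 2 * Real.sqrt 3 + (-43/64:ℝ) * Real.cos t ^ 3 * Real.sin t + (-5/64:ℝ) * Real.cos t ^ 3 * Real.sin t * Real.sqrt 3 ^ 2 + (-25/64:ℝ) * Real.cos t ^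 3 * Real.sin t * Real.sqrt 3 ^ 4 + (1/64:ℝ) * Real.cos t ^ 3 * Real.sin t * Real.sqrt 3 ^ 6 + (3/8:ℝ) * Real.cos t ^ 3 * Real.sin t * Real.sin s ^ 2 + (3/8:ℝ) * Real.cos t ^ 3 * Real.sin t * Real.sin s ^ 2 * Real.sqrt 3 ^ 2 + (-1:ℝ) * Real.cos t ^ 3 * Real.sin t * Real.cos s * Real.sin s * Real.sqrt 3 + (9/8:ℝ) * Real.cos t ^ 3 * Real.sin t * Real.cos s ^ 2 + (1/8:ℝ) * Real.cos t ^ 3 * Real.sin t * Real.cos s ^ 2 * Real.sqrt 3 ^ 2 + (-5/32:ℝ) * Real.cos t ^ 4 * Real.sqrt 3 + (-1/8:ℝ) * Real.cos t ^ 4 * Real.sqrt 3 ^ 3 + (1/32:ℝ) * Real.cos t ^ 4 * Real.sqrt 3 ^ 5 + (3/8:ℝ) * Real.cos t ^ 4 * Real.sin s ^ 2 * Real.sqrt 3 + (-3/8:ℝ) * Real.cos t ^ 4 * Real.cos s * Real.sin s + (1/8:ℝ) * Real.cos t ^ 4 * Real.cos s * Real.sin s * Real.sqrt 3 ^ 2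 + (-1/8:ℝ) * Real.cos t ^ 4 * Real.cos s ^ 2 * Real.sqrt 3) * (Real.sq_sqrt (by norm_num : (0:ℝ) ≤ 3))

lemma keyS2 (t s : ℝ) :
    Real.sin (2*t-2*s+π/3) + 2*Real.cos (-(3*t)-s+π/2)*Real.sin (t-s+π/6)
    = -(Real.sin (4*t-4*π/3) + 2*Real.cos (2*s)*Real.sin (2*t-2*π/3)) := by
  rw [show (2:ℝ)*t-2*s+π/3 = t+t-(s+s)+(π/6+π/6) by ring,
    show -((3:ℝ)*t)-s+π/2 = -(t+t+t)-s+(π/6+π/6+π/6) by ring,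
    show (4:ℝ)*t-4*π/3 = t+t+t+t-(π/6+π/6+π/6+π/6+π/6+π/6+π/6+π/6) by ring,
    show (2:ℝ)*t-2*π/3 = t+t-(π/6+π/6+π/6+π/6) by ring,
    show (2:ℝ)*s = s+s by ring]
  simp only [Real.sin_add, Real.cos_add, Real.sin_sub, Real.cos_sub, Real.sin_neg,
    Real.cos_neg, Real.sin_pi_div_six, Real.cos_pi_div_six]
  linear_combination ((1/2:ℝ) * Real.sqrt 3 + (-1/2:ℝ) * Real.sin s ^ 2 * Real.sqrt 3 + (-1/2:ℝ) * Real.cos s ^ 2 * Real.sqrt 3 + (1/2:ℝ) * Real.sin t ^ 2 * Real.sqrt 3 + (-1:ℝ) * Real.sin t ^ 2 * Real.cos s * Real.sin s + (-1:ℝ) * Real.sin t ^ 2 * Real.cos s ^ 2 * Real.sqrt 3 + (2:ℝ) * Real.cos t * Real.sin t + (-3:ℝ) * Real.cos t * Real.sin t * Real.sin s ^ 2 + (-2:ℝ) * Real.cos t * Real.sin t * Real.cos s * Real.sin s * Real.sqrt 3 + (-1:ℝ) * Real.cos t * Real.sin t * Real.cos s ^ 2 + (-7/2:ℝ) * Real.cos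 t ^ 2 * Real.sqrt 3 + (3:ℝ) * Real.cos t ^ 2 * Real.sin s ^ 2 * Real.sqrt 3 + (1:ℝ) * Real.cos t ^ 2 * Real.cos s * Real.sin s + (4:ℝ) * Real.cos t ^ 2 * Real.cos s ^ 2 * Real.sqrt 3) * Real.sin_sq_add_cos_sq t
    + ((-1/2:ℝ) * Real.sqrt 3 + (-2:ℝ) * Real.cos t * Real.sin t + (4:ℝ) * Real.cos t ^ 2 * Real.sqrt 3 + (4:ℝ) * Real.cos t ^ 3 * Real.sin t + (-4:ℝ) * Real.cos t ^ 4 * Real.sqrt 3) * Real.sin_sq_add_cos_sq s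
    + ((-1/2:ℝ) * Real.sin t ^ 2 * Real.sin s ^ 2 * Real.sqrt 3 + (1/2:ℝ) * Real.sin t ^ 2 * Real.cos s * Real.sin s + (1/2:ℝ) * Real.sin t ^ 2 * Real.cos s ^ 2 * Real.sqrt 3 + (5/32:ℝ) * Real.sin t ^ 4 * Real.sqrt 3 + (1/8:ℝ) * Real.sin t ^ 4 * Real.sqrt 3 ^ 3 + (-1/32:ℝ) * Real.sin t ^ 4 * Real.sqrt 3 ^ 5 + (1/8:ℝ) * Real.sin t ^ 4 * Real.sin s ^ 2 * Real.sqrt 3 + (-3/8:ℝ) * Real.sin t ^ 4 * Real.cos s * Real.sin s + (1/8:ℝ) * Real.sin t ^ 4 * Real.cos s * Real.sin s * Real.sqrt 3 ^ 2 + (-3/8:ℝ) * Real.sin t ^ 4 * Real.cos s ^ 2 * Real.sqrt 3 + (1/4:ℝ) * Real.cos t * Real.sin t * Real.sin s ^ 2 + (-1/4:ℝ) * Real.cos t * Real.sin t * Real.sin s ^ 2 * Real.sqrt 3 ^ 2 + (-1/4:ℝ) * Real.cos t * Real.sin t * Real.cos s ^ 2 + (1/4:ℝ) * Real.cos t * Real.sin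 t * Real.cos s ^ 2 * Real.sqrt 3 ^ 2 + (43/64:ℝ) * Real.cos t * Real.sin t ^ 3 + (5/64:ℝ) * Real.cos t * Real.sin t ^ 3 * Real.sqrt 3 ^ 2 + (25/64:ℝ) * Real.cos t * Real.sin t ^ 3 * Real.sqrt 3 ^ 4 + (-1/64:ℝ) * Real.cos t * Real.sin t ^ 3 * Real.sqrt 3 ^ 6 + (-9/8:ℝ) * Real.cos t * Real.sin t ^ 3 * Real.sin s ^ 2 + (-1/8:ℝ) * Real.cos t * Real.sin t ^ 3 * Real.sin s ^ 2 * Real.sqrt 3 ^ 2 + (-1:ℝ) * Real.cos t * Real.sin t ^ 3 * Real.cos s * Real.sin s * Real.sqrt 3 + (-3/8:ℝ) * Real.cos t * Real.sin t ^ 3 * Real.cos s ^ 2 + (-3/8:ℝ) * Real.cos t * Real.sin t ^ 3 * Real.cos s ^ 2 * Real.sqrt 3 ^ 2 + (1/2:ℝ) * Real.cos t ^ 2 * Real.sin s ^ 2 * Real.sqrt 3 + (-1/2:ℝ) * Real.cos t ^ 2 * Real.cos s * Real.sin s + (-1/2:ℝ) * Real.cos t ^ 2 * Real.cos s ^ 2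 * Real.sqrt 3 + (-15/16:ℝ) * Real.cos t ^ 2 * Real.sin t ^ 2 * Real.sqrt 3 + (-3/4:ℝ) * Real.cos t ^ 2 * Real.sin t ^ 2 * Real.sqrt 3 ^ 3 + (3/16:ℝ) * Real.cos t ^ 2 * Real.sin t ^ 2 * Real.sqrt 3 ^ 5 + (3/4:ℝ) * Real.cos t ^ 2 * Real.sin t ^ 2 * Real.sin s ^ 2 * Real.sqrt 3 + (3/4:ℝ) * Real.cos t ^ 2 * Real.sin t ^ 2 * Real.cos s ^ 2 * Real.sqrt 3 + (-43/64:ℝ) * Real.cos t ^ 3 * Real.sin t + (-5/64:ℝ) * Real.cos t ^ 3 * Real.sin t * Real.sqrt 3 ^ 2 + (-25/64:ℝ) * Real.cos t ^ 3 * Real.sin t * Real.sqrt 3 ^ 4 + (1/64:ℝ) * Real.cos t ^ 3 * Real.sin t * Real.sqrt 3 ^ 6 + (3/8:ℝ) * Real.cos t ^ 3 * Real.sin t * Real.sin s ^ 2 + (3/8:ℝ) * Real.cos t ^ 3 * Real.sin t * Real.sin s ^ 2 * Real.sqrt 3 ^ 2 + (-1:ℝ) * Real.cos t ^ 3 * Real.sin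 t * Real.cos s * Real.sin s * Real.sqrt 3 + (9/8:ℝ) * Real.cos t ^ 3 * Real.sin t * Real.cos s ^ 2 + (1/8:ℝ) * Real.cos t ^ 3 * Real.sin t * Real.cos s ^ 2 * Real.sqrt 3 ^ 2 + (5/32:ℝ) * Real.cos t ^ 4 * Real.sqrt 3 + (1/8:ℝ) * Real.cos t ^ 4 * Real.sqrt 3 ^ 3 + (-1/32:ℝ) * Real.cos t ^ 4 * Real.sqrt 3 ^ 5 + (-3/8:ℝ) * Real.cos t ^ 4 * Real.sin s ^ 2 * Real.sqrt 3 + (3/8:ℝ) * Real.cos t ^ 4 * Real.cos s * Real.sin s + (-1/8:ℝ) * Real.cos t ^ 4 * Real.cos s * Real.sin s * Real.sqrt 3 ^ 2 + (1/8:ℝ) * Real.cos t ^ 4 * Real.cos s ^ 2 * Real.sqrt 3) * (Real.sq_sqrt (by norm_num : (0:ℝ) ≤ 3))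

lemma main_ts (t s : ℝ) :
    (Real.sin (4*t) + 2*Real.cos (2*s)*Real.sin (2*t))^2
    + (Real.sin (2*t+2*s-π/3) + 2*Real.cos (3*t-s+π/2)*Real.sin (t+s-π/6))^2
    + (Real.sin (2*t-2*s+π/3) + 2*Real.cos (-(3*t)-s+π/2)*Real.sin (t-s+π/6))^2
    = 3*(3/2 + (Real.cos (4*s) - 2*Real.cos (2*s)*Real.cos (6*t))) := by
  rw [keyS1 t s, keyS2 t s, neg_sq, neg_sq,
    show (4:ℝ)*t = 2*(2*t) by ring, show (4:ℝ)*s = 2*(2*s) by ring,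
    show (6:ℝ)*t = 3*(2*t) by ring]
  exact keyA (2*t) (2*s)

theorem stmt_13 (u : ℝ → ℝ → ℝ)
    (hu : ∀ x y, u x y = Real.sin (4 * π * x / 3) +
      2 * Real.cos (2 * π * y / Real.sqrt 3) * Real.sin (2 * π * x / 3))
    (σ₁ σ₂ : ℝ × ℝ → ℝ × ℝ)
    (hσ₁ : ∀ x y, σ₁ (x, y) = (x / 2 + Real.sqrt 3 / 2 * y - 1/4,
      Real.sqrt 3 / 2 * x - y / 2 + Real.sqrt 3 / 4))
    (hσ₂ : ∀ x y, σ₂ (x, y) = (x / 2 - Real.sqrt 3 / 2 * y + 1/4,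
      -(Real.sqrt 3 / 2) * x - y / 2 + Real.sqrt 3 / 4))
    (φ : ℝ → ℝ → ℝ)
    (hφ : ∀ x y, φ x y = Real.cos (4 * π * y / Real.sqrt 3) -
      2 * Real.cos (2 * π * y / Real.sqrt 3) * Real.cos (2 * π * x)) :
    ∀ x y : ℝ,
      u x y ^ 2 + u (σ₁ (x, y)).1 (σ₁ (x, y)).2 ^ 2 + u (σ₂ (x, y)).1 (σ₂ (x, y)).2 ^ 2
        = 3 * (3/2 + φ x y) := by
  intro x y
  have h3 : Real.sqrt 3 ≠ 0 := by positivity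
  have hr : Real.sqrt 3 * Real.sqrt 3 = 3 := Real.mul_self_sqrt (by norm_num)
  rw [hσ₁ x y, hσ₂ x y]
  dsimp only
  rw [hu, hu, hu, hφ]
  rw [show 4 * π * (x / 2 + Real.sqrt 3 / 2 * y - 1/4) / 3
        = 2*(π*x/3)+2*(π*y*Real.sqrt 3/3)-π/3 by ring,
      show 2 * π * (x / 2 + Real.sqrt 3 / 2 * y - 1/4) / 3
        = π*x/3+π*y*Real.sqrt 3/3-π/6 by ring,
      show 2 * π * (Real.sqrt 3 / 2 * x - y / 2 + Real.sqrt 3 / 4) / Real.sqrt 3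
        = 3*(π*x/3)-π*y*Real.sqrt 3/3+π/2 by
        rw [div_eq_iff h3]; linear_combination (π*y/3)*hr,
      show 4 * π * (x / 2 - Real.sqrt 3 / 2 * y + 1/4) / 3
        = 2*(π*x/3)-2*(π*y*Real.sqrt 3/3)+π/3 by ring,
      show 2 * π * (x / 2 - Real.sqrt 3 / 2 * y + 1/4) / 3
        = π*x/3-π*y*Real.sqrt 3/3+π/6 by ring,
      show 2 * π * (-(Real.sqrt 3 / 2) * x - y / 2 + Real.sqrt 3 / 4) / Real.sqrt 3
        = -(3*(π*x/3))-π*y*Real.sqrt 3/3+π/2 by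
        rw [div_eq_iff h3]; linear_combination (π*y/3)*hr,
      show 4 * π * y / Real.sqrt 3 = 4*(π*y*Real.sqrt 3/3) by
        rw [div_eq_iff h3]; linear_combination (-(4*π*y/3))*hr,
      show 2 * π * y / Real.sqrt 3 = 2*(π*y*Real.sqrt 3/3) by
        rw [div_eq_iff h3]; linear_combination (-(2*π*y/3))*hr,
      show 4 * π * x / 3 = 4*(π*x/3) by ring,
      show 2 * π * x / 3 = 2*(π*x/3) by ring,
      show 2 * π * x = 6*(π*x/3) by ring]
  exact main_ts (π*x/3) (π*y*Real.sqrt 3/3)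
end

section
/- For a ∈ (0, 1/2), let φ(y) = 2(3a−1)y + √((1 − 2ay)² + 3(1 − 2a)²) and φ̃(y) = √((1 − y(1−2a))² + 3(1−y)²(1−2a)²) for y ∈ [0, 1]. Then φ(y) ≥ 0, φ̃(y) ≥ 0, and φ²(y) − φ̃²(y) = 4y(1 − 3a)·[2(1 − a(1+y)) − √((1 − 2ay)² + 3(1 − 2a)²)]. Consequently, φ(y) ≥ φ̃(y) for a ≤ 1/3 and φ(y) ≤ φ̃(y) for a ≥ 1/3, for all y ∈ [0,1]. -/
theorem stmt_16 (a : ℝ) (ha : a ∈ Set.Ioo (0:ℝ) (1/2))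
    (φ φ' : ℝ → ℝ)
    (hφ : ∀ y, φ y = 2 * (3 * a - 1) * y +
      Real.sqrt ((1 - 2 * a * y) ^ 2 + 3 * (1 - 2 * a) ^ 2))
    (hφ' : ∀ y, φ' y = Real.sqrt ((1 - y * (1 - 2 * a)) ^ 2 +
      3 * (1 - y) ^ 2 * (1 - 2 * a) ^ 2)) :
    (∀ y ∈ Set.Icc (0:ℝ) 1, 0 ≤ φ y) ∧
    (∀ y ∈ Set.Icc (0:ℝ) 1, 0 ≤ φ' y) ∧
    (∀ y ∈ Set.Icc (0:ℝ) 1,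
      φ y ^ 2 - φ' y ^ 2 = 4 * y * (1 - 3 * a) *
        (2 * (1 - a * (1 + y)) -
          Real.sqrt ((1 - 2 * a * y) ^ 2 + 3 * (1 - 2 * a) ^ 2))) ∧
    (a ≤ 1/3 → ∀ y ∈ Set.Icc (0:ℝ) 1, φ' y ≤ φ y) ∧
    (1/3 ≤ a → ∀ y ∈ Set.Icc (0:ℝ) 1, φ y ≤ φ' y) := by
  obtain ⟨ha0, ha2⟩ := ha
  have hE : ∀ y : ℝ, (0:ℝ) ≤ (1 - 2 * a * y) ^ 2 + 3 * (1 - 2 * a) ^ 2 := by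
    intro y; positivity
  have hSnn : ∀ y : ℝ, 0 ≤ Real.sqrt ((1 - 2 * a * y) ^ 2 + 3 * (1 - 2 * a) ^ 2) :=
    fun y => Real.sqrt_nonneg _
  have hS2 : ∀ y : ℝ, (Real.sqrt ((1 - 2 * a * y) ^ 2 + 3 * (1 - 2 * a) ^ 2)) ^ 2 =
      (1 - 2 * a * y) ^ 2 + 3 * (1 - 2 * a) ^ 2 :=
    fun y => Real.sq_sqrt (hE y)
  -- bracket bound: sqrt ≤ 2(1 - a(1+y))
  have hbr : ∀ y ∈ Set.Icc (0:ℝ) 1,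
      Real.sqrt ((1 - 2 * a * y) ^ 2 + 3 * (1 - 2 * a) ^ 2) ≤ 2 * (1 - a * (1 + y)) := by
    intro y ⟨hy0, hy1⟩
    have hrnn : (0:ℝ) ≤ 2 * (1 - a * (1 + y)) := by nlinarith
    have h1 : (1 - 2 * a * y) ^ 2 + 3 * (1 - 2 * a) ^ 2 ≤ (2 * (1 - a * (1 + y))) ^ 2 := by
      nlinarith [mul_nonneg (mul_nonneg ha0.le (by linarith : (0:ℝ) ≤ 1 - 2*a)) (by linarith : (0:ℝ) ≤ 1 - y)]
    calc Real.sqrt ((1 - 2 * a * y) ^ 2 + 3 * (1 - 2 * a) ^ 2)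
        ≤ Real.sqrt ((2 * (1 - a * (1 + y))) ^ 2) := Real.sqrt_le_sqrt h1
      _ = 2 * (1 - a * (1 + y)) := Real.sqrt_sq hrnn
  have hφnn : ∀ y ∈ Set.Icc (0:ℝ) 1, 0 ≤ φ y := by
    intro y ⟨hy0, hy1⟩
    rw [hφ]
    rcases le_or_gt (1/3 : ℝ) a with h | h
    · have := hSnn y; nlinarith
    · -- need 2(1-3a)y ≤ sqrt
      have h1 : 2 * (1 - 3 * a) * y ≤ Real.sqrt ((1 - 2 * a * y) ^ 2 + 3 * (1 - 2 * a) ^ 2) := by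
        have h2 : (2 * (1 - 3 * a) * y) ^ 2 ≤ (1 - 2 * a * y) ^ 2 + 3 * (1 - 2 * a) ^ 2 := by
          have hf1 : (0:ℝ) ≤ 4 * a * (2 - 5 * a) := by nlinarith
          rcases le_or_gt a (1/4 : ℝ) with hc | hc
          · have hcneg : (0:ℝ) ≤ -(4 * (4 * a - 1) * (1 - 2 * a)) := by nlinarith
            nlinarith [mul_nonneg (by linarith : (0:ℝ) ≤ 1 - y)
                (show (0:ℝ) ≤ 1 + 3 * (1 - 2 * a) ^ 2 by positivity),
              mul_nonneg hy0 hf1,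
              mul_nonneg (mul_nonneg hy0 (by linarith : (0:ℝ) ≤ 1 - y)) hcneg]
          · have hcpos : (0:ℝ) ≤ 4 * (4 * a - 1) * (1 - 2 * a) := by nlinarith
            have hf0c : (0:ℝ) ≤ 44 * a ^ 2 - 36 * a + 8 := by nlinarith [sq_nonneg (22 * a - 9)]
            nlinarith [mul_nonneg (by linarith : (0:ℝ) ≤ 1 - y) hf0c,
              mul_nonneg hy0 hf1,
              mul_nonneg hcpos (sq_nonneg (1 - y))]
        calc 2 * (1 - 3 * a) * y = Real.sqrt ((2 * (1 - 3 * a) * y) ^ 2) :=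
              (Real.sqrt_sq (by nlinarith)).symm
          _ ≤ _ := Real.sqrt_le_sqrt h2
      linarith
  have hφ'nn : ∀ y ∈ Set.Icc (0:ℝ) 1, 0 ≤ φ' y := by
    intro y _; rw [hφ']; exact Real.sqrt_nonneg _
  have hid : ∀ y ∈ Set.Icc (0:ℝ) 1,
      φ y ^ 2 - φ' y ^ 2 = 4 * y * (1 - 3 * a) *
        (2 * (1 - a * (1 + y)) -
          Real.sqrt ((1 - 2 * a * y) ^ 2 + 3 * (1 - 2 * a) ^ 2)) := by
    intro y _
    rw [hφ, hφ']
    have h2 : (Real.sqrt ((1 - y * (1 - 2 * a)) ^ 2 + 3 * (1 - y) ^ 2 * (1 - 2 * a) ^ 2)) ^ 2 =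
        (1 - y * (1 - 2 * a)) ^ 2 + 3 * (1 - y) ^ 2 * (1 - 2 * a) ^ 2 :=
      Real.sq_sqrt (by positivity)
    have h1 := hS2 y
    nlinarith [h1, h2]
  refine ⟨hφnn, hφ'nn, hid, ?_, ?_⟩
  · intro h13 y hy
    have h1 := hid y hy
    have h2 := hbr y hy
    have h3 := hφnn y hy
    have h4 := hφ'nn y hy
    have hy0 := hy.1
    nlinarith [sq_nonneg (φ y - φ' y), mul_nonneg (mul_nonneg (by linarith : (0:ℝ) ≤ 4*y) (by linarith : (0:ℝ) ≤ 1 - 3*a)) (by linarith : (0:ℝ) ≤ 2 * (1 - a * (1 + y)) - Real.sqrt ((1 - 2 * a * y) ^ 2 + 3 * (1 - 2 * a) ^ 2))]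
  · intro h13 y hy
    have h1 := hid y hy
    have h2 := hbr y hy
    have h3 := hφnn y hy
    have h4 := hφ'nn y hy
    have hy0 := hy.1
    nlinarith [sq_nonneg (φ y - φ' y), mul_nonneg (mul_nonneg (by linarith : (0:ℝ) ≤ 4*y) (by linarith : (0:ℝ) ≤ 3*a - 1)) (by linarith : (0:ℝ) ≤ 2 * (1 - a * (1 + y)) - Real.sqrt ((1 - 2 * a * y) ^ 2 + 3 * (1 - 2 * a) ^ 2))]
end
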